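/- arXiv:1201.0148 — 2 statements merged into one kernel-verified Lean document; each statement's English description precedes it below -/
import Mathlib

section
/- Let N and M be positive integers, X = max(N, M), Y = min(N, M), let 1 ≤ K ≤ Y, let p_1 < ⋯ < p_K be indices in {1, …, Y}, and let s_1 < ⋯ < s_{Y−K} be the complementary indices. Define the marginal f(μ_{p_1}, …, μ_{p_K}), for μ_{p_1} > μ_{p_2} > ⋯ > μ_{p_K} > 0, as the Lebesgue integral of ψ(μ_1, …, μ_Y) · exp(−Σ_{j=1}^Y μ_j) over the variables μ_{s_1}, …, μ_{s_{Y−K}} ranging over all values for which the full vector satisfies μ_1 > μ_2 > ⋯ > μ_Y > 0. Then there exists a multivariate polynomial r in K variables, each of whose monomials with non-zero coefficient has total degree at least (N − p_1 + 1)(M − p_1 + 1) − K, such that f(μ_{p_1}, …, μ_{p_K}) ≤ r(μ_{p_1}, …, μ_{p_K}) · exp(−Σ_{k=1}^K μ_{p_k}) for all μ_{p_1} > ⋯ > μ_{p_K} > 0. -/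
/-!
For `i < j` we have `0 < μ_i - μ_j < μ_i`, so `ψ(μ)` is dominated by the monomial `∏ μ_i ^ b_i`
with `b_i = X - Y + 2 #{j > i}`, and the integrand by a product of one-variable functions
`μ_i ^ b_i e^{-μ_i}`: the integral over the free variables factorizes. A free variable with
index below `p₁` ranges over `(0, ∞)` and contributes `b_i!`; one with index above `p₁` is
confined to `(0, μ_{p₁})` and contributes at most `μ_{p₁} ^ (b_i + 1)`. The resulting monomial
has degree `∑_{i ≥ p₁} (b_i + 1) - K = (N - p₁ + 1)(M - p₁ + 1) - K`.
-/

open MeasureTheory Real Finset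

/-- The polynomial factor `ψ(μ) = ∏ i μ_i^{X−Y} ∏_{i<j} (μ_i − μ_j)²` of the joint pdf of
the ordered eigenvalues of an uncorrelated central Wishart matrix, where
`X = max N M`, `Y = min N M`. -/
noncomputable def psi (N M : ℕ) (μ : Fin (min N M) → ℝ) : ℝ :=
  (∏ i, μ i ^ (max N M - min N M)) * ∏ i, ∏ j ∈ Finset.Ioi i, (μ i - μ j) ^ 2

/-- Given complementary index selections `p : Fin K → Fin Y` and `s : Fin L → Fin Y`,
assemble a full vector from the values `ν` at the `p`-indices and `t` at the `s`-indices. -/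
noncomputable def merge {Y K L : ℕ} (p : Fin K → Fin Y) (s : Fin L → Fin Y)
    (ν : Fin K → ℝ) (t : Fin L → ℝ) : Fin Y → ℝ := fun i =>
  if h : ∃ k, p k = i then ν h.choose
  else if h' : ∃ l, s l = i then t h'.choose
  else 0

open Function
open scoped Nat

section Merge

variable {Y K L : ℕ} {p : Fin K → Fin Y} {s : Fin L → Fin Y}

theorem bijective_sumElim (hp : Injective p) (hs : Injective s)
    (hps : ∀ i, (∃ k, p k = i) ↔ ¬ ∃ l, s l = i) : Bijective (Sum.elim p s) := by
  refine ⟨?_, fun i => ?_⟩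
  · rintro (k | l) (k' | l') h
    · exact congrArg _ (hp h)
    · exact absurd ⟨l', h.symm⟩ ((hps _).mp ⟨k, rfl⟩)
    · exact absurd ⟨l, h⟩ ((hps _).mp ⟨k', rfl⟩)
    · exact congrArg _ (hs h)
  · by_cases h : ∃ k, p k = i
    · obtain ⟨k, hk⟩ := h
      exact ⟨.inl k, hk⟩
    · obtain ⟨l, hl⟩ := not_not.mp (mt (hps i).mpr h)
      exact ⟨.inr l, hl⟩

@[to_additive]
theorem prod_eq_prod_mul_prod_of_compl {β : Type*} [CommMonoid β] (hp : Injective p)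
    (hs : Injective s) (hps : ∀ i, (∃ k, p k = i) ↔ ¬ ∃ l, s l = i) (f : Fin Y → β) :
    ∏ i, f i = (∏ k, f (p k)) * ∏ l, f (s l) := by
  rw [← Fintype.prod_bijective _ (bijective_sumElim hp hs hps) (f ∘ Sum.elim p s) f
    fun _ => rfl, Fintype.prod_sum_type]
  rfl

theorem merge_apply_left (hp : Injective p) (ν : Fin K → ℝ) (t : Fin L → ℝ) (k : Fin K) :
    merge p s ν t (p k) = ν k := by
  have h : ∃ k', p k' = p k := ⟨k, rfl⟩
  rw [merge, dif_pos h, hp h.choose_spec]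

theorem merge_apply_right (hs : Injective s) (hps : ∀ i, (∃ k, p k = i) ↔ ¬ ∃ l, s l = i)
    (ν : Fin K → ℝ) (t : Fin L → ℝ) (l : Fin L) :
    merge p s ν t (s l) = t l := by
  have h : ∃ l', s l' = s l := ⟨l, rfl⟩
  rw [merge, dif_neg (not_not_intro h |> mt (hps _).mp), dif_pos h, hs h.choose_spec]

theorem measurable_merge (p : Fin K → Fin Y) (s : Fin L → Fin Y) (ν : Fin K → ℝ) :
    Measurable (merge p s ν) := by
  refine measurable_pi_lambda _ fun i => ?_
  unfold merge
  split_ifs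
  · exact measurable_const
  · exact measurable_pi_apply _
  · exact measurable_const

end Merge

theorem measurableSet_setOf_strictAnti {α ι β : Type*} [MeasurableSpace α] [Preorder ι]
    [Countable ι] [TopologicalSpace β] [MeasurableSpace β] [OpensMeasurableSpace β]
    [LinearOrder β] [OrderClosedTopology β] [SecondCountableTopology β] {F : α → ι → β}
    (hF : Measurable F) : MeasurableSet {a | StrictAnti (F a)} := by
  have h : {a | StrictAnti (F a)} = ⋂ i, ⋂ j, {a | i < j → F a j < F a i} := by
    ext a; simp [StrictAnti]
  rw [h]
  refine .iInter fun i => .iInter fun j => ?_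
  by_cases hij : i < j
  · simpa [hij] using measurableSet_lt (measurable_pi_apply j |>.comp hF)
      (measurable_pi_apply i |>.comp hF)
  · simp [hij]

def psiExponent (N M : ℕ) (i : Fin (min N M)) : ℕ :=
  max N M - min N M + 2 * #(Ioi i)

theorem psi_le_prod_pow {N M : ℕ} {μ : Fin (min N M) → ℝ} (hμ : StrictAnti μ)
    (hpos : ∀ i, 0 < μ i) : psi N M μ ≤ ∏ i, μ i ^ psiExponent N M i := by
  have hdiff : ∏ i, ∏ j ∈ Ioi i, (μ i - μ j) ^ 2 ≤ ∏ i, (μ i ^ 2) ^ #(Ioi i) := by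
    refine prod_le_prod (fun i _ => prod_nonneg fun j _ => sq_nonneg _) fun i _ => ?_
    rw [← prod_const]
    refine prod_le_prod (fun j _ => sq_nonneg _) fun j hj => ?_
    have hij := hμ (mem_Ioi.mp hj)
    nlinarith [hpos j]
  calc psi N M μ ≤ (∏ i, μ i ^ (max N M - min N M)) * ∏ i, (μ i ^ 2) ^ #(Ioi i) :=
        mul_le_mul_of_nonneg_left hdiff (prod_nonneg fun i _ => pow_nonneg (hpos i).le _)
    _ = ∏ i, μ i ^ psiExponent N M i := by
        rw [← prod_mul_distrib]
        simp only [psiExponent, pow_add, pow_mul]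

theorem sum_range_add_two_mul_add_one (c m : ℕ) :
    ∑ j ∈ range m, (c + 2 * j + 1) = m * (c + m) := by
  induction m with
  | zero => simp
  | succ m ih => rw [sum_range_succ, ih]; ring

theorem sum_Ici_psiExponent_add_one (N M : ℕ) (P : Fin (min N M)) :
    ∑ i ∈ Ici P, (psiExponent N M i + 1) = (N - P) * (M - P) := by
  have hP : (P : ℕ) < min N M := P.isLt
  have hval : ∑ i ∈ Ici P, (psiExponent N M i + 1) =
      ∑ n ∈ Ico (P : ℕ) (min N M), (max N M - min N M + 2 * (min N M - 1 - n) + 1) := by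
    rw [← Fin.map_valEmbedding_Ici, sum_map]
    simp [psiExponent, Fin.card_Ioi]
  have hNM : (N - P) * (M - P) = (min N M - P) * (max N M - min N M + (min N M - P)) := by
    rcases le_total N M with h | h
    · congr 1 <;> omega
    · rw [mul_comm]; congr 1 <;> omega
  rw [hval, hNM, sum_Ico_reflect (fun j => max N M - min N M + 2 * j + 1) _ (by omega),
    Nat.sub_add_cancel (by omega), Nat.sub_self, ← range_eq_Ico, sum_range_add_two_mul_add_one]

theorem sum_psiExponent_of_compl {N M K L : ℕ} {p : Fin K → Fin (min N M)}
    {s : Fin L → Fin (min N M)} (hK : 0 < K) (hp : StrictMono p) (hs : Injective s)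
    (hps : ∀ i, (∃ k, p k = i) ↔ ¬ ∃ l, s l = i) :
    ∑ k, psiExponent N M (p k) +
        ∑ l, (if p ⟨0, hK⟩ < s l then psiExponent N M (s l) + 1 else 0) =
      (N - p ⟨0, hK⟩) * (M - p ⟨0, hK⟩) - K := by
  set P := p ⟨0, hK⟩
  have hpP : ∀ k, P ≤ p k := fun k => hp.monotone (Fin.le_def.mpr (Nat.zero_le _))
  have hsP : ∀ l, s l ≠ P := fun l h => (hps P).mp ⟨_, rfl⟩ ⟨l, h⟩
  have hsplit := sum_eq_sum_add_sum_of_compl hp.injective hs hps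
    fun i => if P ≤ i then psiExponent N M i + 1 else 0
  rw [← sum_filter, filter_le_eq_Ici, sum_Ici_psiExponent_add_one] at hsplit
  simp only [hpP, if_true, sum_add_distrib, sum_const, card_univ, Fintype.card_fin, smul_eq_mul,
    mul_one] at hsplit
  simp only [fun l => (hsP l).symm.le_iff_lt] at hsplit
  omega

theorem integral_Ioi_pow_mul_exp_neg (n : ℕ) :
    ∫ x in Set.Ioi (0 : ℝ), x ^ n * exp (-x) = n ! := by
  rw [← Real.Gamma_nat_eq_factorial, Real.Gamma_eq_integral (by positivity)]
  refine setIntegral_congr_fun measurableSet_Ioi fun x _ => ?_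
  rw [add_sub_cancel_right, rpow_natCast, mul_comm]

theorem integrableOn_Ioi_pow_mul_exp_neg (n : ℕ) :
    IntegrableOn (fun x : ℝ => x ^ n * exp (-x)) (Set.Ioi 0) :=
  .of_integral_ne_zero (by rw [integral_Ioi_pow_mul_exp_neg]; positivity)

theorem integral_Ioo_pow_mul_exp_neg_le {a : ℝ} (ha : 0 ≤ a) (n : ℕ) :
    ∫ x in Set.Ioo 0 a, x ^ n * exp (-x) ≤ a ^ (n + 1) := by
  have hbound : ∀ x ∈ Set.Ioo 0 a, ‖x ^ n * exp (-x)‖ ≤ a ^ n := fun x ⟨hx0, hxa⟩ => by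
    rw [Real.norm_of_nonneg (by positivity)]
    calc x ^ n * exp (-x) ≤ a ^ n * 1 :=
          mul_le_mul (pow_le_pow_left₀ hx0.le hxa.le n) (exp_le_one_iff.mpr (by linarith))
            (exp_nonneg _) (pow_nonneg ha n)
      _ = a ^ n := mul_one _
  have h := norm_setIntegral_le_of_norm_le_const (μ := volume) measure_Ioo_lt_top hbound
  rw [Real.volume_real_Ioo_of_le ha, sub_zero, ← pow_succ] at h
  exact (le_abs_self _).trans h

theorem setIntegral_le_mul_prod_integral {ι : Type*} [Fintype ι] {S : Set (ι → ℝ)}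
    (hS : MeasurableSet S) {f : (ι → ℝ) → ℝ} {c : ℝ} (hc : 0 ≤ c) {g : ι → ℝ → ℝ}
    (hg_nonneg : ∀ i x, 0 ≤ g i x) (hg : ∀ i, Integrable (g i))
    (hfg : ∀ t ∈ S, f t ≤ c * ∏ i, g i (t i)) :
    ∫ t in S, f t ≤ c * ∏ i, ∫ x, g i x := by
  have hRHS : 0 ≤ c * ∏ i, ∫ x, g i x :=
    mul_nonneg hc (prod_nonneg fun i _ => integral_nonneg (hg_nonneg i))
  by_cases hf : IntegrableOn f S
  · have hG : Integrable fun t : ι → ℝ => c * ∏ i, g i (t i) :=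
      (Integrable.fintype_prod hg).const_mul c
    calc ∫ t in S, f t ≤ ∫ t in S, c * ∏ i, g i (t i) :=
          setIntegral_mono_on hf hG.integrableOn hS hfg
      _ ≤ ∫ t : ι → ℝ, c * ∏ i, g i (t i) := setIntegral_le_integral hG
          (.of_forall fun t : ι → ℝ => mul_nonneg hc (prod_nonneg fun i _ => hg_nonneg i (t i)))
      _ = c * ∏ i, ∫ x, g i x := by
          rw [integral_const_mul, integral_fintype_prod_volume_eq_prod]
  · rw [integral_undef hf]
    exact hRHS

def window {Y : ℕ} (P : Fin Y) (a : ℝ) (i : Fin Y) : Set ℝ :=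
  if P < i then Set.Ioo 0 a else Set.Ioi 0

section Window

variable {Y : ℕ} (P i : Fin Y) (a : ℝ) (n : ℕ)

theorem window_subset_Ioi : window P a i ⊆ Set.Ioi 0 := by
  unfold window
  split_ifs
  exacts [Set.Ioo_subset_Ioi_self, subset_rfl]

theorem measurableSet_window : MeasurableSet (window P a i) := by
  unfold window
  split_ifs
  exacts [measurableSet_Ioo, measurableSet_Ioi]

theorem indicator_window_nonneg (x : ℝ) :
    0 ≤ (window P a i).indicator (fun x => x ^ n * exp (-x)) x :=
  Set.indicator_nonneg (fun x hx => by
    have : 0 < x := window_subset_Ioi P i a hx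
    positivity) x

theorem integrable_indicator_window :
    Integrable ((window P a i).indicator fun x => x ^ n * exp (-x)) := by
  rw [integrable_indicator_iff (measurableSet_window P i a)]
  exact (integrableOn_Ioi_pow_mul_exp_neg n).mono_set (window_subset_Ioi P i a)

theorem integral_indicator_window_le (ha : 0 ≤ a) :
    ∫ x, (window P a i).indicator (fun x => x ^ n * exp (-x)) x ≤
      if P < i then a ^ (n + 1) else (n ! : ℝ) := by
  rw [integral_indicator (measurableSet_window P i a)]
  unfold window
  split_ifs
  · exact integral_Ioo_pow_mul_exp_neg_le ha n
  · exact (integral_Ioi_pow_mul_exp_neg n).le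

end Window

section Marginal

variable {N M K L : ℕ} {p : Fin K → Fin (min N M)} {s : Fin L → Fin (min N M)}

theorem psi_mul_exp_merge_le (hK : 0 < K) (hp : Injective p) (hs : Injective s)
    (hps : ∀ i, (∃ k, p k = i) ↔ ¬ ∃ l, s l = i) {ν : Fin K → ℝ} {t : Fin L → ℝ}
    (hanti : StrictAnti (merge p s ν t)) (hpos : ∀ i, 0 < merge p s ν t i) :
    psi N M (merge p s ν t) * exp (-∑ j, merge p s ν t j) ≤
      (∏ k, ν k ^ psiExponent N M (p k) * exp (-ν k)) *
        ∏ l, (window (p ⟨0, hK⟩) (ν ⟨0, hK⟩) (s l)).indicator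
          (fun x => x ^ psiExponent N M (s l) * exp (-x)) (t l) := by
  set μ := merge p s ν t
  have hμp : ∀ k, μ (p k) = ν k := merge_apply_left hp ν t
  have hμs : ∀ l, μ (s l) = t l := merge_apply_right hs hps ν t
  have hwindow : ∀ l, t l ∈ window (p ⟨0, hK⟩) (ν ⟨0, hK⟩) (s l) := fun l => by
    have ht : 0 < t l := hμs l ▸ hpos (s l)
    unfold window
    split_ifs with h
    · exact ⟨ht, hμs l ▸ hμp ⟨0, hK⟩ ▸ hanti h⟩
    · exact ht
  calc psi N M μ * exp (-∑ j, μ j)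
      ≤ (∏ i, μ i ^ psiExponent N M i) * ∏ i, exp (-μ i) := by
        rw [← sum_neg_distrib, exp_sum]
        gcongr
        exact psi_le_prod_pow hanti hpos
    _ = (∏ k, ν k ^ psiExponent N M (p k) * exp (-ν k)) *
          ∏ l, t l ^ psiExponent N M (s l) * exp (-t l) := by
        rw [← prod_mul_distrib, prod_eq_prod_mul_prod_of_compl hp hs hps]
        simp only [hμp, hμs]
    _ = _ := by
        simp only [Set.indicator_of_mem (hwindow _)]

theorem marginal_integral_le (hK : 0 < K) (hp : Injective p) (hs : Injective s)
    (hps : ∀ i, (∃ k, p k = i) ↔ ¬ ∃ l, s l = i) {ν : Fin K → ℝ} (hν : ∀ k, 0 < ν k) :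
    ∫ t in {t : Fin L → ℝ | StrictAnti (merge p s ν t) ∧ ∀ i, 0 < merge p s ν t i},
        psi N M (merge p s ν t) * exp (-∑ j, merge p s ν t j) ≤
      (∏ k, ν k ^ psiExponent N M (p k) * exp (-ν k)) *
        ∏ l, if p ⟨0, hK⟩ < s l then ν ⟨0, hK⟩ ^ (psiExponent N M (s l) + 1)
          else ((psiExponent N M (s l))! : ℝ) := by
  have hmerge := measurable_merge p s ν
  have hpos_meas : MeasurableSet {t : Fin L → ℝ | ∀ i, 0 < merge p s ν t i} := by
    rw [Set.ofPred_forall]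
    exact .iInter fun i => measurableSet_lt measurable_const ((measurable_pi_apply i).comp hmerge)
  have hS := (measurableSet_setOf_strictAnti hmerge).inter hpos_meas
  have hc : 0 ≤ ∏ k, ν k ^ psiExponent N M (p k) * exp (-ν k) :=
    prod_nonneg fun k _ => by have := hν k; positivity
  refine (setIntegral_le_mul_prod_integral hS hc (fun l => indicator_window_nonneg _ _ _ _)
    (fun l => integrable_indicator_window _ _ _ _)
    (fun t ht => psi_mul_exp_merge_le hK hp hs hps ht.1 ht.2)).trans ?_
  gcongr with l
  · exact fun l _ => integral_nonneg (indicator_window_nonneg _ _ _ _)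
  · exact integral_indicator_window_le _ _ _ _ (hν _).le

end Marginal

section BoundPolynomial

open MvPolynomial

variable {N M K L : ℕ} (hK : 0 < K) (p : Fin K → Fin (min N M)) (s : Fin L → Fin (min N M))

noncomputable def marginalBound : MvPolynomial (Fin K) ℝ :=
  (∏ k, X k ^ psiExponent N M (p k)) *
    ∏ l, if p ⟨0, hK⟩ < s l then X ⟨0, hK⟩ ^ (psiExponent N M (s l) + 1)
      else C ((psiExponent N M (s l))! : ℝ)

theorem isHomogeneous_marginalBound :
    (marginalBound hK p s).IsHomogeneous (∑ k, psiExponent N M (p k) +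
      ∑ l, if p ⟨0, hK⟩ < s l then psiExponent N M (s l) + 1 else 0) :=
  (IsHomogeneous.prod _ _ _ fun k _ => isHomogeneous_X_pow _ _).mul <|
    IsHomogeneous.prod _ _ _ fun l _ => by
      split_ifs
      exacts [isHomogeneous_X_pow _ _, isHomogeneous_C _ _]

theorem eval_marginalBound (ν : Fin K → ℝ) :
    eval ν (marginalBound hK p s) = (∏ k, ν k ^ psiExponent N M (p k)) *
      ∏ l, if p ⟨0, hK⟩ < s l then ν ⟨0, hK⟩ ^ (psiExponent N M (s l) + 1)
        else ((psiExponent N M (s l))! : ℝ) := by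
  simp only [marginalBound, map_mul, map_prod, apply_ite (MvPolynomial.eval ν), map_pow, eval_X,
    eval_C]

end BoundPolynomial

/-- `p` is 0-based, so `N - p ⟨0, hK⟩` is the paper's `N - p₁ + 1`. -/
theorem marginal_pdf_upper_bound_general (N M : ℕ)
    (K : ℕ) (hK : 0 < K)
    (p : Fin K → Fin (min N M)) (hp : StrictMono p)
    (s : Fin (min N M - K) → Fin (min N M)) (hs : StrictMono s)
    (hps : ∀ i : Fin (min N M), (∃ k, p k = i) ↔ ¬ ∃ l, s l = i) :
    ∃ r : MvPolynomial (Fin K) ℝ,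
      (∀ d ∈ r.support,
        (N - (p ⟨0, hK⟩ : ℕ)) * (M - (p ⟨0, hK⟩ : ℕ)) - K ≤ d.sum fun _ e => e) ∧
      ∀ ν : Fin K → ℝ, StrictAnti ν → (∀ k, 0 < ν k) →
        (∫ t in {t : Fin (min N M - K) → ℝ |
            StrictAnti (merge p s ν t) ∧ ∀ i, 0 < merge p s ν t i},
            psi N M (merge p s ν t) * Real.exp (-∑ j, merge p s ν t j)) ≤
          MvPolynomial.eval ν r * Real.exp (-∑ k, ν k) := by
  refine ⟨marginalBound hK p s, fun d hd => ?_, fun ν _ hν => ?_⟩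
  · rw [← sum_psiExponent_of_compl hK hp hs.injective hps,
      (isHomogeneous_marginalBound hK p s).degree_eq_sum_deg_support hd]
    rfl
  · refine (marginal_integral_le hK hp.injective hs.injective hps hν).trans_eq ?_
    rw [eval_marginalBound, prod_mul_distrib, ← exp_sum, sum_neg_distrib]
    ring

/-- the marginal pdf of the `K` ordered eigenvalues selected by `p`
(obtained by integrating `ψ(μ) e^{−Σ_j μ_j}` over the complementary variables selected by
`s`, on the region where the full vector is strictly decreasing and positive) is bounded
above by `r(ν) e^{−Σ_k ν_k}` for some polynomial `r` all of whose monomials have total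
degree at least `(N − p₁ + 1)(M − p₁ + 1) − K` (with `p₁` the 1-based first index, so
written `(N − p 0)(M − p 0) − K` with 0-based `p 0`). -/
theorem marginal_pdf_upper_bound (N M : ℕ) (hN : 0 < N) (hM : 0 < M)
    (K : ℕ) (hK : 0 < K) (hKY : K ≤ min N M)
    (p : Fin K → Fin (min N M)) (hp : StrictMono p)
    (s : Fin (min N M - K) → Fin (min N M)) (hs : StrictMono s)
    (hps : ∀ i : Fin (min N M), (∃ k, p k = i) ↔ ¬ ∃ l, s l = i) :
    ∃ r : MvPolynomial (Fin K) ℝ,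
      (∀ d ∈ r.support,
        (N - (p ⟨0, hK⟩ : ℕ)) * (M - (p ⟨0, hK⟩ : ℕ)) - K ≤ d.sum fun _ e => e) ∧
      ∀ ν : Fin K → ℝ, StrictAnti ν → (∀ k, 0 < ν k) →
        (∫ t in {t : Fin (min N M - K) → ℝ |
            StrictAnti (merge p s ν t) ∧ ∀ i, 0 < merge p s ν t i},
            psi N M (merge p s ν t) * Real.exp (-∑ j, merge p s ν t j)) ≤
          MvPolynomial.eval ν r * Real.exp (-∑ k, ν k) :=
  marginal_pdf_upper_bound_general N M K hK p hp s hs hps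
end

section
/- Let K be a positive integer, let d be a non-negative integer, and let r be a multivariate polynomial in K real variables each of whose monomials with non-zero coefficient has total degree at least d. Then there exists a constant η > 0 such that for every ω ≥ 1, the absolute value of the Lebesgue integral of r(θ_1, …, θ_K) · exp(−ω (θ_1 + ⋯ + θ_K)) over the ordered cone {θ ∈ ℝ^K : θ_1 > θ_2 > ⋯ > θ_K > 0} is at most η · ω^{−(K + d)}. -/
open MeasureTheory Real Set
open scoped Nat

/-!
Bound `|r|` on the cone by the polynomial with coefficients `|r.coeff m|` and enlarge the cone to
the positive orthant. There Fubini splits each monomial integral into one-dimensional Gamma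
integrals, `∫ θ^m exp(-ω ∑ θᵢ) = ∏ mᵢ! / ω^(K + |m|)`, and `|m| ≥ d`, `ω ≥ 1` give the decay
`ω^(-(K + d))` term by term.
-/

lemma inv_pow_le_zpow_neg {ω : ℝ} (hω : 1 ≤ ω) {k n : ℕ} (h : k ≤ n) :
    (ω ^ n)⁻¹ ≤ ω ^ (-(k : ℤ)) := by
  rw [zpow_neg, zpow_natCast]
  exact inv_anti₀ (by positivity) (pow_le_pow_right₀ hω h)

lemma integral_pow_mul_exp_neg_mul_Ioi (n : ℕ) {ω : ℝ} (hω : 0 < ω) :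
    ∫ t in Ioi 0, t ^ n * exp (-(ω * t)) = n ! / ω ^ (n + 1) := by
  have h := integral_rpow_mul_exp_neg_mul_Ioi (by positivity : (0 : ℝ) < n + 1) hω
  simp only [add_sub_cancel_right, rpow_natCast] at h
  rw [h, Gamma_nat_eq_factorial, ← Nat.cast_succ, rpow_natCast, one_div, inv_pow, inv_mul_eq_div]

lemma integrableOn_pow_mul_exp_neg_mul_Ioi (n : ℕ) {ω : ℝ} (hω : 0 < ω) :
    IntegrableOn (fun t ↦ t ^ n * exp (-(ω * t))) (Ioi 0) :=
  .of_integral_ne_zero (by rw [integral_pow_mul_exp_neg_mul_Ioi n hω]; positivity)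

section Orthant

variable {ι : Type*} [Fintype ι]

lemma restrict_volume_pi_Ioi_zero :
    (volume : Measure (ι → ℝ)).restrict (univ.pi fun _ ↦ Ioi 0) =
      Measure.pi fun _ ↦ volume.restrict (Ioi 0) := by
  rw [volume_pi, Measure.restrict_pi_pi]

lemma monomial_mul_exp_neg_mul_sum_eq_prod (m : ι → ℕ) (ω : ℝ) (θ : ι → ℝ) :
    (∏ i, θ i ^ m i) * exp (-(ω * ∑ i, θ i)) = ∏ i, θ i ^ m i * exp (-(ω * θ i)) := by
  rw [Finset.prod_mul_distrib, ← exp_sum, Finset.mul_sum, Finset.sum_neg_distrib]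

lemma integrableOn_monomial_mul_exp_neg_mul_sum (m : ι → ℕ) {ω : ℝ} (hω : 0 < ω) :
    IntegrableOn (fun θ : ι → ℝ ↦ (∏ i, θ i ^ m i) * exp (-(ω * ∑ i, θ i)))
      (univ.pi fun _ ↦ Ioi 0) := by
  simp_rw [IntegrableOn, monomial_mul_exp_neg_mul_sum_eq_prod, restrict_volume_pi_Ioi_zero]
  exact Integrable.fintype_prod fun i ↦ integrableOn_pow_mul_exp_neg_mul_Ioi (m i) hω

lemma integral_monomial_mul_exp_neg_mul_sum (m : ι → ℕ) {ω : ℝ} (hω : 0 < ω) :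
    ∫ θ in univ.pi fun _ ↦ Ioi 0, (∏ i, θ i ^ m i) * exp (-(ω * ∑ i, θ i)) =
      (∏ i, ((m i)! : ℝ)) / ω ^ (Fintype.card ι + ∑ i, m i) := by
  simp_rw [monomial_mul_exp_neg_mul_sum_eq_prod, restrict_volume_pi_Ioi_zero,
    integral_fintype_prod_eq_prod (𝕜 := ℝ) (fun i t ↦ t ^ m i * exp (-(ω * t))),
    integral_pow_mul_exp_neg_mul_Ioi _ hω, Finset.prod_div_distrib, Finset.prod_pow_eq_pow_sum,
    Finset.sum_add_distrib, Finset.sum_const, Finset.card_univ, smul_eq_mul, mul_one, add_comm]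

lemma abs_eval_mul_exp_le_sum_abs_coeff_mul (r : MvPolynomial ι ℝ) (ω : ℝ) {θ : ι → ℝ}
    (hθ : ∀ i, 0 ≤ θ i) :
    |MvPolynomial.eval θ r * exp (-(ω * ∑ i, θ i))| ≤
      ∑ m ∈ r.support, |r.coeff m| * ((∏ i, θ i ^ m i) * exp (-(ω * ∑ i, θ i))) := by
  simp_rw [abs_mul, abs_exp, ← mul_assoc, ← Finset.sum_mul, MvPolynomial.eval_eq']
  gcongr
  refine (Finset.abs_sum_le_sum_abs _ _).trans_eq (Finset.sum_congr rfl fun m _ ↦ ?_)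
  rw [abs_mul, abs_of_nonneg (Finset.prod_nonneg fun i _ ↦ pow_nonneg (hθ i) _)]

lemma abs_setIntegral_eval_mul_exp_le {S : Set (ι → ℝ)} (hS : MeasurableSet S)
    (hS_sub : S ⊆ univ.pi fun _ ↦ Ioi 0) (r : MvPolynomial ι ℝ) {ω : ℝ} (hω : 0 < ω) :
    |∫ θ in S, MvPolynomial.eval θ r * exp (-(ω * ∑ i, θ i))| ≤
      ∑ m ∈ r.support, |r.coeff m| * ((∏ i, ((m i)! : ℝ)) / ω ^ (Fintype.card ι + ∑ i, m i)) := by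
  set majorant : (ι → ℝ) → ℝ := fun θ ↦
    ∑ m ∈ r.support, |r.coeff m| * ((∏ i, θ i ^ m i) * exp (-(ω * ∑ i, θ i)))
  have hint : IntegrableOn majorant (univ.pi fun _ ↦ Ioi 0) :=
    integrable_finsetSum r.support fun m _ ↦
      (integrableOn_monomial_mul_exp_neg_mul_sum m hω).const_mul _
  have hpos : ∀ θ ∈ univ.pi (fun _ : ι ↦ Ioi (0 : ℝ)), ∀ i, 0 ≤ θ i :=
    fun θ hθ i ↦ (hθ i (mem_univ i)).le
  calc |∫ θ in S, MvPolynomial.eval θ r * exp (-(ω * ∑ i, θ i))|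
      ≤ ∫ θ in S, majorant θ := by
        rw [← Real.norm_eq_abs]
        exact norm_integral_le_of_norm_le (hint.mono_set hS_sub) <| ae_restrict_of_forall_mem hS
          fun θ hθ ↦ abs_eval_mul_exp_le_sum_abs_coeff_mul r ω (hpos θ (hS_sub hθ))
    _ ≤ ∫ θ in univ.pi fun _ ↦ Ioi 0, majorant θ := by
        refine setIntegral_mono_set hint (ae_restrict_of_forall_mem
          (MeasurableSet.univ_pi fun _ ↦ measurableSet_Ioi) fun θ hθ ↦ ?_) hS_sub.eventuallyLE
        exact Finset.sum_nonneg fun m _ ↦ mul_nonneg (abs_nonneg _) <| mul_nonneg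
          (Finset.prod_nonneg fun i _ ↦ pow_nonneg (hpos θ hθ i) _) (exp_pos _).le
    _ = _ := by
        rw [integral_finsetSum r.support fun m _ ↦
          (integrableOn_monomial_mul_exp_neg_mul_sum m hω).const_mul _]
        refine Finset.sum_congr rfl fun m _ ↦ ?_
        rw [integral_const_mul, integral_monomial_mul_exp_neg_mul_sum m hω]

end Orthant

def orderedCone (ι : Type*) [Preorder ι] : Set (ι → ℝ) := {θ | StrictAnti θ ∧ ∀ i, 0 < θ i}

lemma orderedCone_subset_pi_Ioi (ι : Type*) [Preorder ι] :
    orderedCone ι ⊆ univ.pi fun _ ↦ Ioi 0 :=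
  fun _ hθ i _ ↦ hθ.2 i

lemma measurableSet_orderedCone (ι : Type*) [Preorder ι] [Countable ι] :
    MeasurableSet (orderedCone ι) := by
  simp only [orderedCone, StrictAnti, ofPred_and, ofPred_forall]
  exact .inter (.iInter fun i ↦ .iInter fun j ↦ .iInter fun _ ↦
    measurableSet_lt (measurable_pi_apply j) (measurable_pi_apply i))
    (.iInter fun i ↦ measurableSet_lt measurable_const (measurable_pi_apply i))

theorem polynomial_cone_integral_bound_general (K : ℕ) (d : ℕ)
    (r : MvPolynomial (Fin K) ℝ)
    (hr : ∀ m ∈ r.support, d ≤ m.sum fun _ e => e) :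
    ∃ η : ℝ, 0 < η ∧ ∀ ω : ℝ, 1 ≤ ω →
      |∫ θ in {θ : Fin K → ℝ | StrictAnti θ ∧ ∀ i, 0 < θ i},
          MvPolynomial.eval θ r * Real.exp (-(ω * ∑ i, θ i))| ≤
        η * ω ^ (-((K : ℤ) + d)) := by
  refine ⟨1 + ∑ m ∈ r.support, |r.coeff m| * ∏ i, ((m i)! : ℝ), by positivity, fun ω hω ↦ ?_⟩
  have hdecay : ∀ m ∈ r.support, (ω ^ (K + ∑ i, m i))⁻¹ ≤ ω ^ (-((K : ℤ) + d)) := by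
    intro m hm
    have hdeg := hr m hm
    rw [Finsupp.sum_fintype _ _ fun _ ↦ rfl] at hdeg
    exact_mod_cast inv_pow_le_zpow_neg hω (Nat.add_le_add_left hdeg K)
  calc |∫ θ in orderedCone (Fin K), MvPolynomial.eval (θ : Fin K → ℝ) r * exp (-(ω * ∑ i, θ i))|
      ≤ ∑ m ∈ r.support, |r.coeff m| * ((∏ i, ((m i)! : ℝ)) / ω ^ (K + ∑ i, m i)) := by
        simpa only [Fintype.card_fin] using abs_setIntegral_eval_mul_exp_le
          (measurableSet_orderedCone _) (orderedCone_subset_pi_Ioi _) r (by linarith : (0 : ℝ) < ω)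
    _ ≤ ∑ m ∈ r.support, |r.coeff m| * ((∏ i, ((m i)! : ℝ)) * ω ^ (-((K : ℤ) + d))) := by
        gcongr with m hm
        exact (div_eq_mul_inv _ _).trans_le (by gcongr; exact hdecay m hm)
    _ ≤ _ := by
        simp_rw [← mul_assoc, ← Finset.sum_mul]
        gcongr
        linarith

/-- if every monomial of the polynomial `r` in `K` variables has total
degree at least `d`, then there is `η > 0` such that for all `ω ≥ 1`, the absolute value
of the integral of `r(θ) exp(−ω Σ θ_i)` over the ordered cone is at most
`η ω^{−(K + d)}`. -/
theorem polynomial_cone_integral_bound (K : ℕ) (hK : 0 < K) (d : ℕ)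
    (r : MvPolynomial (Fin K) ℝ)
    (hr : ∀ m ∈ r.support, d ≤ m.sum fun _ e => e) :
    ∃ η : ℝ, 0 < η ∧ ∀ ω : ℝ, 1 ≤ ω →
      |∫ θ in {θ : Fin K → ℝ | StrictAnti θ ∧ ∀ i, 0 < θ i},
          MvPolynomial.eval θ r * Real.exp (-(ω * ∑ i, θ i))| ≤
        η * ω ^ (-((K : ℤ) + d)) :=
  polynomial_cone_integral_bound_general K d r hr
end
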